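/- arXiv:1211.4976 — 2 statements merged into one kernel-verified Lean document; each statement's English description precedes it below -/
import Mathlib

section
/- Fix 0 < α < 1 and set ε = 2α(1−α) and P_Total = (1−ε)² + ε². Define Bob's conditional error ε₂ = ε²/P_Total = (2α − 2α²)²/P_Total and Eve's conditional error δ₂ = (1/P_Total)·[2((1−α)²·α² + α(1−α)·α(1−α)) + (α²)² + (α(1−α))²] (the N = 2 binomial sum with p00 = (1−α)², p01 = α², p10 = p11 = α(1−α)). Then δ₂ > ε₂. -/
/-- Core inequality of the Proposition: for the N = 2 repetition protocol with equal
local noise α at Alice and Bob and noiseless Eve, Eve's conditional error δ₂ strictly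
exceeds Bob's conditional error ε₂. -/
theorem eve_error_gt_bob_error (α : ℝ) (hα0 : 0 < α) (hα1 : α < 1)
    (ε PT ε₂ δ₂ : ℝ)
    (hε : ε = 2 * α * (1 - α)) (hPT : PT = (1 - ε) ^ 2 + ε ^ 2)
    (hε₂ : ε₂ = ε ^ 2 / PT)
    (hδ₂ : δ₂ = (1 / PT) *
      (2 * ((1 - α) ^ 2 * α ^ 2 + (α * (1 - α)) * (α * (1 - α))) +
        (α ^ 2) ^ 2 + (α * (1 - α)) ^ 2)) :
    δ₂ > ε₂ := by
  have hPT0 : 0 < PT := by nlinarith [sq_nonneg (1 - ε), sq_nonneg ε, sq_nonneg (1 - 2*ε)]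
  rw [hε₂, hδ₂, gt_iff_lt, div_lt_iff₀ hPT0, one_div, inv_mul_eq_div, div_mul_cancel₀ _ hPT0.ne']
  nlinarith [sq_nonneg α, pow_pos hα0 4, mul_pos (mul_pos (mul_pos hα0 hα0) (sub_pos.2 hα1)) (sub_pos.2 hα1)]
end

section
/- Let R₁, R₂ and C be independent uniform Boolean random variables and let N^A₁, N^A₂, N^B₁, N^B₂ be mutually independent Boolean random variables each equal to 1 with probability α, 0 < α < 1, independent of (R₁, R₂, C). Set Xᵢ = Rᵢ XOR N^Aᵢ, Yᵢ = Rᵢ XOR N^Bᵢ, Zᵢ = Rᵢ for i = 1, 2. Bob accepts when (X₁ XOR C XOR Y₁) = (X₂ XOR C XOR Y₂), and his decoded bit then errs exactly when X₁ XOR C XOR Y₁ ≠ C; Eve errs (or ties) when her two decoded values X₁ XOR C XOR Z₁ and X₂ XOR C XOR Z₂ are not both equal to C. Then P(Eve errs or ties | Bob accepts) > P(Bob errs | Bob accepts). -/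
/-!
The bits Rᵢ and C cancel from Bob's and Eve's decoded bits, so all three events depend only on
the noise. Let s = α² + (1 - α)² be the probability that two independent Bernoulli(α) bits
agree. Bob accepts and decodes correctly iff NAᵢ = NBᵢ for i = 1, 2, which has probability s²;
Bob accepts and Eve decodes correctly iff NA₁ = NA₂ = 0 and NB₁ = NB₂, which has probability
(1 - α)² s. As α > 0 we have (1 - α)² < s, so given acceptance Eve is correct less often than Bob.
-/

open MeasureTheory ProbabilityTheory

namespace ProbabilityTheory

variable {Ω : Type*} [MeasurableSpace Ω] {μ : Measure Ω}

lemma IndepFun.measureReal_inter_preimage_eq_mul {β γ : Type*} [MeasurableSpace β]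
    [MeasurableSpace γ] {f : Ω → β} {g : Ω → γ} (h : IndepFun f g μ) {s : Set β} {t : Set γ}
    (hs : MeasurableSet s) (ht : MeasurableSet t) :
    μ.real (f ⁻¹' s ∩ g ⁻¹' t) = μ.real (f ⁻¹' s) * μ.real (g ⁻¹' t) := by
  simp only [measureReal_def, h.measure_inter_preimage_eq_mul s t hs ht, ENNReal.toReal_mul]

lemma IndepFun.probReal_eq_and_eq {X Y : Ω → Bool} (h : IndepFun X Y μ) (a b : Bool) :
    μ.real {ω | X ω = a ∧ Y ω = b} = μ.real {ω | X ω = a} * μ.real {ω | Y ω = b} :=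
  h.measureReal_inter_preimage_eq_mul (measurableSet_singleton a) (measurableSet_singleton b)

lemma cond_compl_lt_cond_compl [IsFiniteMeasure μ] {A E F : Set Ω} (hE : MeasurableSet E)
    (hF : MeasurableSet F) (h : μ.real (A ∩ E) < μ.real (A ∩ F)) : μ[Fᶜ|A] < μ[Eᶜ|A] := by
  have hA : μ A ≠ 0 := fun hA ↦ by
    have : μ.real (A ∩ F) = 0 := measureReal_mono_null Set.inter_subset_left
      ((measureReal_eq_zero_iff (measure_ne_top μ A)).mpr hA)
    linarith [measureReal_nonneg (μ := μ) (s := A ∩ E)]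
  rw [cond_apply' hE.compl, cond_apply' hF.compl]
  refine ENNReal.mul_lt_mul_right (ENNReal.inv_ne_zero.mpr (measure_ne_top μ A))
    (ENNReal.inv_ne_top.mpr hA) ?_
  rw [← ENNReal.toReal_lt_toReal (measure_ne_top μ _) (measure_ne_top μ _), ← Set.sdiff_eq,
    ← Set.sdiff_eq]
  change μ.real (A \ F) < μ.real (A \ E)
  linarith [measureReal_inter_add_sdiff (μ := μ) (s := A) hE,
    measureReal_inter_add_sdiff (μ := μ) (s := A) hF]

variable [IsProbabilityMeasure μ]

lemma probReal_eq_false {X : Ω → Bool} (hX : Measurable X) :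
    μ.real {ω | X ω = false} = 1 - μ.real {ω | X ω = true} := by
  have hcompl : {ω | X ω = false} = {ω | X ω = true}ᶜ := by
    ext ω
    simp
  rw [hcompl]
  exact probReal_compl_eq_one_sub (hX (measurableSet_singleton true))

lemma IndepFun.probReal_eq_eq {X Y : Ω → Bool} (h : IndepFun X Y μ) (hX : Measurable X)
    (hY : Measurable Y) {p q : ℝ} (hp : μ.real {ω | X ω = true} = p)
    (hq : μ.real {ω | Y ω = true} = q) :
    μ.real {ω | X ω = Y ω} = p * q + (1 - p) * (1 - q) := by
  have hsplit : {ω | X ω = Y ω} =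
      {ω | X ω = true ∧ Y ω = true} ∪ {ω | X ω = false ∧ Y ω = false} := by
    ext ω
    simp only [Set.mem_ofPred_eq, Set.mem_union]
    cases X ω <;> cases Y ω <;> decide
  have hdisj : Disjoint {ω | X ω = true ∧ Y ω = true} {ω | X ω = false ∧ Y ω = false} :=
    Set.disjoint_left.mpr fun ω h h' ↦ by simp_all
  rw [hsplit, measureReal_union hdisj ((hX (measurableSet_singleton false)).inter
      (hY (measurableSet_singleton false))), h.probReal_eq_and_eq, h.probReal_eq_and_eq,
    probReal_eq_false hX, probReal_eq_false hY, hp, hq]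

end ProbabilityTheory

namespace Bool

lemma xor_xor_xor_xor_cancel_left (r a b c : Bool) :
    xor (xor (xor r a) c) (xor r b) = xor (xor a b) c := by
  decide +revert

lemma xor_xor_xor_cancel_left (r a c : Bool) : xor (xor (xor r a) c) r = xor a c := by
  decide +revert

lemma xor_eq_right_iff (a c : Bool) : xor a c = c ↔ a = false := by
  decide +revert

lemma xor_xor_eq_right_iff (a b c : Bool) : xor (xor a b) c = c ↔ a = b := by
  decide +revert

end Bool

section Protocol

variable {Ω : Type*} [MeasurableSpace Ω] {μ : Measure Ω} [IsProbabilityMeasure μ]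
  {A₁ A₂ B₁ B₂ : Ω → Bool}

lemma probReal_accept_inter_eve_correct (hmeas : ∀ i, Measurable (![A₁, A₂, B₁, B₂] i))
    (hind : iIndepFun ![A₁, A₂, B₁, B₂] μ) {α : ℝ} (hA₁ : μ.real {ω | A₁ ω = true} = α)
    (hA₂ : μ.real {ω | A₂ ω = true} = α) (hB₁ : μ.real {ω | B₁ ω = true} = α)
    (hB₂ : μ.real {ω | B₂ ω = true} = α) :
    μ.real ({ω | xor (A₁ ω) (B₁ ω) = xor (A₂ ω) (B₂ ω)} ∩ {ω | A₁ ω = false ∧ A₂ ω = false}) =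
      (1 - α) ^ 2 * (α ^ 2 + (1 - α) ^ 2) := by
  have hset : {ω | xor (A₁ ω) (B₁ ω) = xor (A₂ ω) (B₂ ω)} ∩ {ω | A₁ ω = false ∧ A₂ ω = false} =
      (fun ω ↦ (A₁ ω, A₂ ω)) ⁻¹' {p | p.1 = false ∧ p.2 = false} ∩
        (fun ω ↦ (B₁ ω, B₂ ω)) ⁻¹' {p | p.1 = p.2} := by
    ext ω
    simp only [Set.mem_inter_iff, Set.mem_ofPred_eq, Set.mem_preimage]
    generalize A₁ ω = a₁, A₂ ω = a₂, B₁ ω = b₁, B₂ ω = b₂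
    decide +revert
  have hAB : IndepFun (fun ω ↦ (A₁ ω, A₂ ω)) (fun ω ↦ (B₁ ω, B₂ ω)) μ :=
    hind.indepFun_prodMk_prodMk hmeas 0 1 2 3 (by decide) (by decide) (by decide) (by decide)
  have hA :
      μ.real ((fun ω ↦ (A₁ ω, A₂ ω)) ⁻¹' {p | p.1 = false ∧ p.2 = false}) = (1 - α) ^ 2 := by
    have hA12 : IndepFun A₁ A₂ μ := hind.indepFun (i := 0) (j := 1) (by decide)
    change μ.real {ω | A₁ ω = false ∧ A₂ ω = false} = _
    rw [hA12.probReal_eq_and_eq, probReal_eq_false (X := A₁) (hmeas 0),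
      probReal_eq_false (X := A₂) (hmeas 1), hA₁, hA₂]
    ring
  have hB : μ.real ((fun ω ↦ (B₁ ω, B₂ ω)) ⁻¹' {p | p.1 = p.2}) = α ^ 2 + (1 - α) ^ 2 := by
    have hB12 : IndepFun B₁ B₂ μ := hind.indepFun (i := 2) (j := 3) (by decide)
    change μ.real {ω | B₁ ω = B₂ ω} = _
    rw [hB12.probReal_eq_eq (X := B₁) (Y := B₂) (hmeas 2) (hmeas 3) hB₁ hB₂]
    ring
  rw [hset, hAB.measureReal_inter_preimage_eq_mul (.of_discrete) (.of_discrete), hA, hB]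

lemma probReal_accept_inter_bob_correct (hmeas : ∀ i, Measurable (![A₁, A₂, B₁, B₂] i))
    (hind : iIndepFun ![A₁, A₂, B₁, B₂] μ) {α : ℝ} (hA₁ : μ.real {ω | A₁ ω = true} = α)
    (hA₂ : μ.real {ω | A₂ ω = true} = α) (hB₁ : μ.real {ω | B₁ ω = true} = α)
    (hB₂ : μ.real {ω | B₂ ω = true} = α) :
    μ.real ({ω | xor (A₁ ω) (B₁ ω) = xor (A₂ ω) (B₂ ω)} ∩ {ω | A₁ ω = B₁ ω}) =
      (α ^ 2 + (1 - α) ^ 2) ^ 2 := by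
  have hset : {ω | xor (A₁ ω) (B₁ ω) = xor (A₂ ω) (B₂ ω)} ∩ {ω | A₁ ω = B₁ ω} =
      (fun ω ↦ (A₁ ω, B₁ ω)) ⁻¹' {p | p.1 = p.2} ∩
        (fun ω ↦ (A₂ ω, B₂ ω)) ⁻¹' {p | p.1 = p.2} := by
    ext ω
    simp only [Set.mem_inter_iff, Set.mem_ofPred_eq, Set.mem_preimage]
    generalize A₁ ω = a₁, A₂ ω = a₂, B₁ ω = b₁, B₂ ω = b₂
    decide +revert
  have h12 : IndepFun (fun ω ↦ (A₁ ω, B₁ ω)) (fun ω ↦ (A₂ ω, B₂ ω)) μ :=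
    hind.indepFun_prodMk_prodMk hmeas 0 2 1 3 (by decide) (by decide) (by decide) (by decide)
  have h1 : μ.real {ω | A₁ ω = B₁ ω} = α * α + (1 - α) * (1 - α) :=
    (hind.indepFun (i := 0) (j := 2) (by decide)).probReal_eq_eq (hmeas 0) (hmeas 2) hA₁ hB₁
  have h2 : μ.real {ω | A₂ ω = B₂ ω} = α * α + (1 - α) * (1 - α) :=
    (hind.indepFun (i := 1) (j := 3) (by decide)).probReal_eq_eq (hmeas 1) (hmeas 3) hA₂ hB₂
  rw [hset, h12.measureReal_inter_preimage_eq_mul (.of_discrete) (.of_discrete)]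
  change μ.real {ω | A₁ ω = B₁ ω} * μ.real {ω | A₂ ω = B₂ ω} = _
  rw [h1, h2]
  ring

end Protocol

theorem n2_protocol_advantage_general {Ω : Type*} [MeasurableSpace Ω] (μ : Measure Ω)
    [IsProbabilityMeasure μ]
    (R₁ R₂ C NA₁ NA₂ NB₁ NB₂ : Ω → Bool)
    (hmeas : ∀ i, Measurable (![R₁, R₂, C, NA₁, NA₂, NB₁, NB₂] i))
    (hind : iIndepFun ![R₁, R₂, C, NA₁, NA₂, NB₁, NB₂] μ)
    (α : ℝ) (hα0 : 0 < α)
    (hNA₁ : (μ {ω | NA₁ ω = true}).toReal = α)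
    (hNA₂ : (μ {ω | NA₂ ω = true}).toReal = α)
    (hNB₁ : (μ {ω | NB₁ ω = true}).toReal = α)
    (hNB₂ : (μ {ω | NB₂ ω = true}).toReal = α) :
    -- conditioned on Bob accepting, Eve errs/ties with larger probability than Bob errs
    ((μ[|{ω | xor (xor (xor (R₁ ω) (NA₁ ω)) (C ω)) (xor (R₁ ω) (NB₁ ω)) =
              xor (xor (xor (R₂ ω) (NA₂ ω)) (C ω)) (xor (R₂ ω) (NB₂ ω))}])
        {ω | ¬(xor (xor (xor (R₁ ω) (NA₁ ω)) (C ω)) (R₁ ω) = C ω ∧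
               xor (xor (xor (R₂ ω) (NA₂ ω)) (C ω)) (R₂ ω) = C ω)}) >
    ((μ[|{ω | xor (xor (xor (R₁ ω) (NA₁ ω)) (C ω)) (xor (R₁ ω) (NB₁ ω)) =
              xor (xor (xor (R₂ ω) (NA₂ ω)) (C ω)) (xor (R₂ ω) (NB₂ ω))}])
        {ω | xor (xor (xor (R₁ ω) (NA₁ ω)) (C ω)) (xor (R₁ ω) (NB₁ ω)) ≠ C ω}) := by
  have hnoise : iIndepFun ![NA₁, NA₂, NB₁, NB₂] μ := by
    convert hind.precomp (g := ![3, 4, 5, 6]) (by decide) using 1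
    funext i
    fin_cases i <;> rfl
  have hnoise_meas : ∀ i, Measurable (![NA₁, NA₂, NB₁, NB₂] i) := fun i ↦ by
    fin_cases i
    exacts [hmeas 3, hmeas 4, hmeas 5, hmeas 6]
  have hacc : {ω | xor (xor (xor (R₁ ω) (NA₁ ω)) (C ω)) (xor (R₁ ω) (NB₁ ω)) =
        xor (xor (xor (R₂ ω) (NA₂ ω)) (C ω)) (xor (R₂ ω) (NB₂ ω))} =
      {ω | xor (NA₁ ω) (NB₁ ω) = xor (NA₂ ω) (NB₂ ω)} := Set.ext fun ω ↦ by
    simp only [Set.mem_ofPred_eq, Bool.xor_xor_xor_xor_cancel_left, Bool.xor_left_inj]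
  have heve : {ω | ¬(xor (xor (xor (R₁ ω) (NA₁ ω)) (C ω)) (R₁ ω) = C ω ∧
        xor (xor (xor (R₂ ω) (NA₂ ω)) (C ω)) (R₂ ω) = C ω)} =
      {ω | NA₁ ω = false ∧ NA₂ ω = false}ᶜ := Set.ext fun ω ↦ by
    simp only [Set.mem_ofPred_eq, Set.mem_compl_iff, Bool.xor_xor_xor_cancel_left,
      Bool.xor_eq_right_iff]
  have hbob : {ω | xor (xor (xor (R₁ ω) (NA₁ ω)) (C ω)) (xor (R₁ ω) (NB₁ ω)) ≠ C ω} =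
      {ω | NA₁ ω = NB₁ ω}ᶜ := Set.ext fun ω ↦ by
    simp only [Set.mem_ofPred_eq, Set.mem_compl_iff, Bool.xor_xor_xor_xor_cancel_left, ne_eq,
      Bool.xor_xor_eq_right_iff]
  rw [hacc, heve, hbob, gt_iff_lt]
  refine cond_compl_lt_cond_compl ((hmeas 3 (measurableSet_singleton false)).inter
    (hmeas 4 (measurableSet_singleton false))) (measurableSet_eq_fun (hmeas 3) (hmeas 5)) ?_
  rw [probReal_accept_inter_eve_correct hnoise_meas hnoise hNA₁ hNA₂ hNB₁ hNB₂,
    probReal_accept_inter_bob_correct hnoise_meas hnoise hNA₁ hNA₂ hNB₁ hNB₂, sq (_ + _)]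
  have hs : 0 < α ^ 2 + (1 - α) ^ 2 := by positivity
  exact mul_lt_mul_of_pos_right (by linarith [pow_pos hα0 2]) hs

/-- The N = 2 advantage-distillation protocol: with independent uniform bits R₁, R₂, C,
Alice and Bob adding independent Bernoulli(α) local noise and Eve adding none,
conditioned on Bob accepting, the probability that Eve errs (or ties) strictly exceeds
the probability that Bob errs. -/
theorem n2_protocol_advantage {Ω : Type*} [MeasurableSpace Ω] (μ : Measure Ω)
    [IsProbabilityMeasure μ]
    (R₁ R₂ C NA₁ NA₂ NB₁ NB₂ : Ω → Bool)
    (hmeas : ∀ i, Measurable (![R₁, R₂, C, NA₁, NA₂, NB₁, NB₂] i))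
    (hind : iIndepFun ![R₁, R₂, C, NA₁, NA₂, NB₁, NB₂] μ)
    (α : ℝ) (hα0 : 0 < α) (hα1 : α < 1)
    (hR₁ : (μ {ω | R₁ ω = true}).toReal = 1 / 2)
    (hR₂ : (μ {ω | R₂ ω = true}).toReal = 1 / 2)
    (hC : (μ {ω | C ω = true}).toReal = 1 / 2)
    (hNA₁ : (μ {ω | NA₁ ω = true}).toReal = α)
    (hNA₂ : (μ {ω | NA₂ ω = true}).toReal = α)
    (hNB₁ : (μ {ω | NB₁ ω = true}).toReal = α)
    (hNB₂ : (μ {ω | NB₂ ω = true}).toReal = α) :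
    -- conditioned on Bob accepting, Eve errs/ties with larger probability than Bob errs
    ((μ[|{ω | xor (xor (xor (R₁ ω) (NA₁ ω)) (C ω)) (xor (R₁ ω) (NB₁ ω)) =
              xor (xor (xor (R₂ ω) (NA₂ ω)) (C ω)) (xor (R₂ ω) (NB₂ ω))}])
        {ω | ¬(xor (xor (xor (R₁ ω) (NA₁ ω)) (C ω)) (R₁ ω) = C ω ∧
               xor (xor (xor (R₂ ω) (NA₂ ω)) (C ω)) (R₂ ω) = C ω)}) >
    ((μ[|{ω | xor (xor (xor (R₁ ω) (NA₁ ω)) (C ω)) (xor (R₁ ω) (NB₁ ω)) =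
              xor (xor (xor (R₂ ω) (NA₂ ω)) (C ω)) (xor (R₂ ω) (NB₂ ω))}])
        {ω | xor (xor (xor (R₁ ω) (NA₁ ω)) (C ω)) (xor (R₁ ω) (NB₁ ω)) ≠ C ω}) :=
  n2_protocol_advantage_general μ R₁ R₂ C NA₁ NA₂ NB₁ NB₂ hmeas hind α hα0 hNA₁ hNA₂ hNB₁ hNB₂
end
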